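/- Every self-adjoint linear relation Λ on G admits a normalized parameterization: there exist bounded linear operators A, B on G with A B* = B A*, with M^{A,B} boundedly invertible, and with Λ = Λ^{A,B}. -/

import Mathlib

/-!
The Cayley transform. For a self-adjoint relation `Λ` and `σ = ±i`, the map `(x₁, x₂) ↦ x₂ + σ x₁`
sends `Λ` onto `G` and preserves the graph inner product `⟪x₁, y₁⟫ + ⟪x₂, y₂⟫`: the cross terms
cancel by symmetry of `Λ`, so the map is bounded below on the closed subspace `Λ = Λ*` and has
closed range, whose orthogonal complement is trivial because `Λ* ⊆ Λ`. Hence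
`V : x₂ + i x₁ ↦ x₂ - i x₁` is a unitary operator on `G`, and
`Λ = {(x₁, x₂) | V (x₂ + i x₁) = x₂ - i x₁} = Λ^{A,B}` with `A = -i (1 + V)`, `B = V - 1`.
Unitarity of `V` gives `A B* = B A*`, `A* B = B* A` and `A A* + B B* = A* A + B* B = 4`, so,
as `M^{A,B} M^{C,D} = M^{AC-BD, AD+BC}`, the operator `M^{A,B}` has inverse `M^{A*, -B*} / 4`.
-/

open ContinuousLinearMap

variable {G : Type*} [NormedAddCommGroup G] [InnerProductSpace ℂ G] [CompleteSpace G]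

/-- The operator `M^{A,B}` on `G × G`, `(x₁,x₂) ↦ (A x₁ - B x₂, B x₁ + A x₂)`. -/
noncomputable def MAB (A B : G →L[ℂ] G) : (G × G) →L[ℂ] (G × G) :=
  ((A.comp (fst ℂ G G)) - (B.comp (snd ℂ G G))).prod
    ((B.comp (fst ℂ G G)) + (A.comp (snd ℂ G G)))

/-- The linear relation `Λ^{A,B} = {(x₁,x₂) : A x₁ = B x₂}`. -/
def LambdaAB (A B : G →L[ℂ] G) : Submodule ℂ (G × G) where
  carrier := {p | A p.1 = B p.2}
  add_mem' := by
    intro a b ha hb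
    simp only [Set.mem_setOf_eq] at *
    simp [ha, hb]
  zero_mem' := by simp
  smul_mem' := by
    intro c p hp
    simp only [Set.mem_setOf_eq] at *
    simp [hp]

/-- The adjoint of a linear relation. -/
def relAdjoint (Λ : Submodule ℂ (G × G)) : Submodule ℂ (G × G) where
  carrier := {p | ∀ q ∈ Λ, (inner ℂ p.1 q.2 : ℂ) = inner ℂ p.2 q.1}
  add_mem' := by
    intro a b ha hb q hq
    simp [inner_add_left, ha q hq, hb q hq]
  zero_mem' := by
    intro q hq; simp
  smul_mem' := by
    intro c p hp q hq
    simp [inner_smul_left, hp q hq]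

/-- A linear relation is self-adjoint if it equals its adjoint. -/
def IsSelfAdjointRel (Λ : Submodule ℂ (G × G)) : Prop := relAdjoint Λ = Λ

/-- A bounded operator is boundedly invertible if it has a bounded two-sided inverse. -/
def IsBoundedlyInvertible {E F : Type*} [NormedAddCommGroup E] [NormedSpace ℂ E]
    [NormedAddCommGroup F] [NormedSpace ℂ F] (T : E →L[ℂ] F) : Prop :=
  ∃ T' : F →L[ℂ] E, (∀ x, T' (T x) = x) ∧ (∀ y, T (T' y) = y)

/-- The pair `(A,B)` is normalized if `A B* = B A*` and `M^{A,B}` is boundedly invertible. -/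
noncomputable def IsNormalized (A B : G →L[ℂ] G) : Prop :=
  A ∘L adjoint B = B ∘L adjoint A ∧ IsBoundedlyInvertible (MAB A B)

open scoped InnerProductSpace
open Complex ComplexConjugate

section MAB

variable {E : Type*} [NormedAddCommGroup E] [InnerProductSpace ℂ E]

theorem MAB_apply (A B : E →L[ℂ] E) (x : E × E) :
    MAB A B x = (A x.1 - B x.2, B x.1 + A x.2) := rfl

theorem MAB_mul (A B C D : E →L[ℂ] E) :
    MAB A B * MAB C D = MAB (A * C - B * D) (A * D + B * C) := by
  refine ContinuousLinearMap.ext fun x ↦ ?_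
  change MAB A B (MAB C D x) = _
  simp only [MAB_apply, map_sub, map_add, sub_apply, add_apply, mul_apply_eq_comp]
  congr 1 <;> abel

theorem MAB_one_zero : MAB (1 : E →L[ℂ] E) 0 = 1 := by
  ext x <;> simp [MAB]

theorem isBoundedlyInvertible_MAB {A B C D : E →L[ℂ] E}
    (hAC : A * C - B * D = 1) (hAD : A * D + B * C = 0)
    (hCA : C * A - D * B = 1) (hCB : C * B + D * A = 0) : IsBoundedlyInvertible (MAB A B) := by
  refine ⟨MAB C D, fun x ↦ ?_, fun x ↦ ?_⟩
  · exact DFunLike.congr_fun (by rw [MAB_mul, hCA, hCB, MAB_one_zero] : MAB C D * MAB A B = 1) x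
  · exact DFunLike.congr_fun (by rw [MAB_mul, hAC, hAD, MAB_one_zero] : MAB A B * MAB C D = 1) x

theorem mem_LambdaAB_cayley_iff (V : E →L[ℂ] E) {p : E × E} :
    p ∈ LambdaAB (-I • (1 + V)) (V - 1) ↔ V (p.2 + I • p.1) = p.2 - I • p.1 := by
  change -I • (p.1 + V p.1) = V p.2 - p.2 ↔ _
  rw [map_add, map_smul]
  constructor <;> intro h <;> linear_combination (norm := module) -h

end MAB

namespace Unitary

variable {R : Type*} [Ring R] [StarRing R] [Algebra ℂ R] [StarModule ℂ R] {U : R}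

theorem cayley_mul_star_comm (hU : U ∈ unitary R) :
    (-I • (1 + U)) * star (U - 1) = (U - 1) * star (-I • (1 + U)) := by
  simp only [star_smul, star_add, star_sub, star_one, Complex.star_def, map_neg, conj_I,
    mul_add, add_mul, mul_sub, sub_mul, smul_mul_assoc, mul_smul_comm, one_mul, mul_one,
    mul_star_self_of_mem hU]
  module

theorem cayley_star_mul_comm (hU : U ∈ unitary R) :
    star (-I • (1 + U)) * (U - 1) = star (U - 1) * (-I • (1 + U)) := by
  simp only [star_smul, star_add, star_sub, star_one, Complex.star_def, map_neg, conj_I,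
    mul_add, add_mul, mul_sub, sub_mul, smul_mul_assoc, mul_smul_comm, one_mul, mul_one,
    star_mul_self_of_mem hU]
  module

theorem cayley_mul_star_add (hU : U ∈ unitary R) :
    (-I • (1 + U)) * star (-I • (1 + U)) + (U - 1) * star (U - 1) = (4 : ℂ) • 1 := by
  simp only [star_smul, star_add, star_sub, star_one, Complex.star_def, map_neg, conj_I,
    mul_add, add_mul, mul_sub, sub_mul, smul_mul_assoc, mul_smul_comm, one_mul, mul_one,
    mul_star_self_of_mem hU]
  match_scalars <;> ring_nf <;> simp only [I_sq] <;> norm_num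

theorem cayley_star_mul_add (hU : U ∈ unitary R) :
    star (-I • (1 + U)) * (-I • (1 + U)) + star (U - 1) * (U - 1) = (4 : ℂ) • 1 := by
  simp only [star_smul, star_add, star_sub, star_one, Complex.star_def, map_neg, conj_I,
    mul_add, add_mul, mul_sub, sub_mul, smul_mul_assoc, mul_smul_comm, one_mul, mul_one,
    star_mul_self_of_mem hU]
  match_scalars <;> ring_nf <;> simp only [I_sq] <;> norm_num

end Unitary

theorem isBoundedlyInvertible_MAB_of_star {A B : G →L[ℂ] G} {c : ℂ} (hc : c ≠ 0)
    (hAA : A * star A + B * star B = c • 1) (hAA' : star A * A + star B * B = c • 1)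
    (hAB : A * star B = B * star A) (hAB' : star A * B = star B * A) :
    IsBoundedlyInvertible (MAB A B) := by
  refine isBoundedlyInvertible_MAB (C := c⁻¹ • star A) (D := -c⁻¹ • star B) ?_ ?_ ?_ ?_
  · rw [mul_smul_comm, mul_smul_comm, neg_smul, sub_neg_eq_add, ← smul_add, hAA, smul_smul,
      inv_mul_cancel₀ hc, one_smul]
  · rw [mul_smul_comm, mul_smul_comm, neg_smul, ← sub_eq_neg_add, ← smul_sub, hAB, sub_self,
      smul_zero]
  · rw [smul_mul_assoc, smul_mul_assoc, neg_smul, sub_neg_eq_add, ← smul_add, hAA', smul_smul,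
      inv_mul_cancel₀ hc, one_smul]
  · rw [smul_mul_assoc, smul_mul_assoc, neg_smul, ← sub_eq_add_neg, ← smul_sub, hAB', sub_self,
      smul_zero]

theorem isNormalized_of_mem_unitary {U : G →L[ℂ] G} (hU : U ∈ unitary (G →L[ℂ] G)) :
    IsNormalized (-I • (1 + U)) (U - 1) := by
  refine ⟨?_, isBoundedlyInvertible_MAB_of_star (by norm_num) (Unitary.cayley_mul_star_add hU)
    (Unitary.cayley_star_mul_add hU) (Unitary.cayley_mul_star_comm hU)
    (Unitary.cayley_star_mul_comm hU)⟩
  rw [← star_eq_adjoint, ← star_eq_adjoint]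
  exact Unitary.cayley_mul_star_comm hU

section CayleyMap

variable {E : Type*} [NormedAddCommGroup E] [InnerProductSpace ℂ E]

theorem isClosed_relAdjoint (Λ : Submodule ℂ (E × E)) : IsClosed (relAdjoint Λ : Set (E × E)) := by
  have : (relAdjoint Λ : Set (E × E)) = ⋂ q ∈ Λ, {p : E × E | ⟪p.1, q.2⟫_ℂ = ⟪p.2, q.1⟫_ℂ} := by
    ext p
    simp only [Set.mem_iInter]
    rfl
  rw [this]
  exact isClosed_biInter fun q _ ↦
    isClosed_eq (continuous_fst.inner continuous_const) (continuous_snd.inner continuous_const)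

noncomputable def cayleyMap (σ : ℂ) : E × E →L[ℂ] E := snd ℂ E E + σ • fst ℂ E E

theorem cayleyMap_apply (σ : ℂ) (p : E × E) : cayleyMap σ p = p.2 + σ • p.1 := rfl

variable {Λ : Submodule ℂ (E × E)} {σ : ℂ}

theorem inner_cayleyMap_of_mem (hΛ : Λ ≤ relAdjoint Λ) (hσ : conj σ = -σ) (hσ2 : σ * σ = -1)
    {p q : E × E} (hp : p ∈ Λ) (hq : q ∈ Λ) :
    ⟪cayleyMap σ p, cayleyMap σ q⟫_ℂ = ⟪p.1, q.1⟫_ℂ + ⟪p.2, q.2⟫_ℂ := by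
  have hsymm : ⟪p.1, q.2⟫_ℂ = ⟪p.2, q.1⟫_ℂ := hΛ hp q hq
  simp only [cayleyMap_apply, inner_add_left, inner_add_right, inner_smul_left,
    inner_smul_right, hσ, hsymm]
  linear_combination (-⟪p.1, q.1⟫_ℂ) * hσ2

theorem norm_le_norm_cayleyMap_of_mem (hΛ : Λ ≤ relAdjoint Λ) (hσ : conj σ = -σ)
    (hσ2 : σ * σ = -1) {p : E × E} (hp : p ∈ Λ) : ‖p‖ ≤ ‖cayleyMap σ p‖ := by
  have h : ‖cayleyMap σ p‖ ^ 2 = ‖p.1‖ ^ 2 + ‖p.2‖ ^ 2 := by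
    have := inner_cayleyMap_of_mem hΛ hσ hσ2 hp hp
    simp only [inner_self_eq_norm_sq_to_K] at this
    exact_mod_cast this
  rw [Prod.norm_def]
  refine max_le ?_ ?_ <;> nlinarith [norm_nonneg p.1, norm_nonneg p.2, norm_nonneg (cayleyMap σ p)]

theorem antilipschitzWith_cayleyMap_comp_subtype (hΛ : Λ ≤ relAdjoint Λ) (hσ : conj σ = -σ)
    (hσ2 : σ * σ = -1) : AntilipschitzWith 1 ((cayleyMap σ).comp Λ.subtypeL) :=
  ContinuousLinearMap.antilipschitz_of_bound _ fun p ↦ by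
    simpa using norm_le_norm_cayleyMap_of_mem hΛ hσ hσ2 p.2

theorem orthogonal_range_cayleyMap_comp_subtype (hΛ : IsSelfAdjointRel Λ) (hσ : conj σ = -σ)
    (hσ2 : σ * σ = -1) : (LinearMap.range ((cayleyMap σ).comp Λ.subtypeL : Λ →ₗ[ℂ] E))ᗮ = ⊥ := by
  rw [Submodule.eq_bot_iff]
  intro w hw
  -- `w ⊥ x₂ + σ x₁` for all `(x₁, x₂) ∈ Λ` says `(w, σ w) ∈ Λ* = Λ`; symmetry then forces `w = 0`.
  have hmem : ((w, σ • w) : E × E) ∈ Λ := by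
    refine hΛ.le fun q hq ↦ ?_
    have h0 : ⟪cayleyMap σ q, w⟫_ℂ = 0 :=
      (Submodule.mem_orthogonal _ w).mp hw _ (LinearMap.mem_range_self _ (⟨q, hq⟩ : Λ))
    rw [← inner_conj_symm, map_eq_zero, cayleyMap_apply, inner_add_right, inner_smul_right] at h0
    simp only [inner_smul_left, hσ]
    linear_combination h0
  have hsymm : ⟪w, σ • w⟫_ℂ = ⟪σ • w, w⟫_ℂ := hΛ.ge hmem _ hmem
  simp only [inner_smul_left, inner_smul_right, hσ] at hsymm
  have hσ0 : 2 * σ ≠ 0 := by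
    rintro h
    have : σ = 0 := by linear_combination h / 2
    simp [this] at hσ2
  have : (2 * σ) * ⟪w, w⟫_ℂ = 0 := by linear_combination hsymm
  simpa [hσ0] using this

theorem Prod.ext_of_add_I_smul_of_sub_I_smul {x y : E × E} (hadd : x.2 + I • x.1 = y.2 + I • y.1)
    (hsub : x.2 - I • x.1 = y.2 - I • y.1) : x = y := by
  refine Prod.ext (smul_right_injective E (by simp : (2 * I) ≠ 0) ?_)
    (smul_right_injective E (by simp : (2 : ℂ) ≠ 0) ?_)
  · linear_combination (norm := module) hadd - hsub
  · linear_combination (norm := module) hadd + hsub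

end CayleyMap

section CayleyTransform

variable {Λ : Submodule ℂ (G × G)} {σ : ℂ}

theorem bijective_cayleyMap_comp_subtype (hΛ : IsSelfAdjointRel Λ) (hσ : conj σ = -σ)
    (hσ2 : σ * σ = -1) : Function.Bijective ((cayleyMap σ).comp Λ.subtypeL) := by
  have : CompleteSpace Λ := (hΛ ▸ isClosed_relAdjoint Λ).completeSpace_coe
  have hanti := antilipschitzWith_cayleyMap_comp_subtype hΛ.ge hσ hσ2
  refine ⟨hanti.injective, ?_⟩
  have hclosed :
      IsClosed (LinearMap.range ((cayleyMap σ).comp Λ.subtypeL : Λ →ₗ[ℂ] G) : Set G) := by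
    rw [LinearMap.coe_range]
    exact hanti.isClosed_range ((cayleyMap σ).comp Λ.subtypeL).uniformContinuous
  have : CompleteSpace (LinearMap.range ((cayleyMap σ).comp Λ.subtypeL : Λ →ₗ[ℂ] G)) :=
    hclosed.completeSpace_coe
  exact LinearMap.range_eq_top.mp
    (Submodule.orthogonal_eq_bot_iff.mp (orthogonal_range_cayleyMap_comp_subtype hΛ hσ hσ2))

noncomputable def cayleyEquiv (hΛ : IsSelfAdjointRel Λ) (hσ : conj σ = -σ) (hσ2 : σ * σ = -1) :
    Λ ≃ₗ[ℂ] G :=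
  LinearEquiv.ofBijective _ (bijective_cayleyMap_comp_subtype hΛ hσ hσ2)

theorem cayleyEquiv_apply (hΛ : IsSelfAdjointRel Λ) (hσ : conj σ = -σ) (hσ2 : σ * σ = -1)
    (p : Λ) : cayleyEquiv hΛ hσ hσ2 p = cayleyMap σ p := rfl

noncomputable def cayleyTransform (hΛ : IsSelfAdjointRel Λ) : G ≃ₗᵢ[ℂ] G :=
  let cayleyPlus := cayleyEquiv hΛ conj_I I_mul_I
  let cayleyMinus := cayleyEquiv hΛ (σ := -I) (by simp) (by simp)
  (cayleyPlus.symm.trans cayleyMinus).isometryOfInner fun x y ↦ by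
    obtain ⟨p, rfl⟩ := cayleyPlus.surjective x
    obtain ⟨q, rfl⟩ := cayleyPlus.surjective y
    rw [LinearEquiv.trans_apply, LinearEquiv.trans_apply, LinearEquiv.symm_apply_apply,
      LinearEquiv.symm_apply_apply]
    exact (inner_cayleyMap_of_mem hΛ.ge (by simp) (by simp) p.2 q.2).trans
      (inner_cayleyMap_of_mem hΛ.ge conj_I I_mul_I p.2 q.2).symm

theorem cayleyTransform_apply_of_mem (hΛ : IsSelfAdjointRel Λ) {p : G × G} (hp : p ∈ Λ) :
    cayleyTransform hΛ (p.2 + I • p.1) = p.2 - I • p.1 := by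
  have h : cayleyTransform hΛ (cayleyMap I p) = cayleyMap (-I) p :=
    congrArg (cayleyEquiv hΛ (σ := -I) (by simp) (by simp))
      ((cayleyEquiv hΛ conj_I I_mul_I).symm_apply_apply ⟨p, hp⟩)
  rwa [cayleyMap_apply, cayleyMap_apply, neg_smul, ← sub_eq_add_neg] at h

theorem mem_iff_cayleyTransform (hΛ : IsSelfAdjointRel Λ) {p : G × G} :
    p ∈ Λ ↔ cayleyTransform hΛ (p.2 + I • p.1) = p.2 - I • p.1 := by
  refine ⟨cayleyTransform_apply_of_mem hΛ, fun h ↦ ?_⟩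
  obtain ⟨⟨q, hq⟩, hqp⟩ := (cayleyEquiv hΛ conj_I I_mul_I).surjective (p.2 + I • p.1)
  rw [cayleyEquiv_apply, cayleyMap_apply] at hqp
  have hqp' := cayleyTransform_apply_of_mem hΛ hq
  rw [hqp, h] at hqp'
  exact Prod.ext_of_add_I_smul_of_sub_I_smul hqp hqp'.symm ▸ hq

end CayleyTransform

/-- Every self-adjoint linear relation admits a normalized
parameterization. -/
theorem exists_normalized_parameterization (Λ : Submodule ℂ (G × G))
    (hΛ : IsSelfAdjointRel Λ) :
    ∃ A B : G →L[ℂ] G, A ∘L adjoint B = B ∘L adjoint A ∧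
      IsBoundedlyInvertible (MAB A B) ∧ Λ = LambdaAB A B := by
  let U : G →L[ℂ] G := cayleyTransform hΛ
  have hU : U ∈ unitary (G →L[ℂ] G) := (Unitary.linearIsometryEquiv.symm (cayleyTransform hΛ)).2
  obtain ⟨hcomm, hinv⟩ := isNormalized_of_mem_unitary hU
  refine ⟨_, _, hcomm, hinv, ?_⟩
  ext p
  rw [mem_LambdaAB_cayley_iff, mem_iff_cayleyTransform hΛ]
  rfl
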